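/- arXiv:1811.09757 — 6 statements merged into one kernel-verified Lean document; each statement's English description precedes it below -/
import Mathlib

section
/- Modified PhIK preserves linear constraints up to a bounded error (Theorem 2.1): under the stated assumptions, let y ∈ ℝᴺ be a vector of observations, Δμ ∈ ℝ a constant, ã = C_MC⁻¹(y − μ_MC(X) − Δμ·𝟙) ∈ ℝᴺ where μ_MC(X) = (μ_MC(x⁽¹⁾), …, μ_MC(x⁽ᴺ⁾))ᵀ and 𝟙 is the all-ones vector, and define the prediction ŷ : D → ℝ by ŷ(x) = μ_MC(x) + Δμ + ∑_{i=1}^N ãᵢ·k_MC(x, x⁽ⁱ⁾). Then ‖L(ŷ) − ḡ‖ ≤ ε + (2ε·√(M/(M−1)) + σ_g)·‖C_MC⁻¹‖₂·‖y − μ_MC(X) − Δμ·𝟙‖₂·∑_{i=1}^N σᵢ + ‖L(c_Δμ)‖, where c_Δμ : D → ℝ is the constant function with value Δμ. -/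
/-- The Euclidean (ℓ²) norm of a vector in `ℝᴺ`. -/
noncomputable def euclNorm {N : ℕ} (v : Fin N → ℝ) : ℝ :=
  ‖(EuclideanSpace.equiv (Fin N) ℝ).symm v‖

/-- The operator (spectral) norm of an `N×N` real matrix with respect to the
Euclidean norm. -/
noncomputable def matOpNorm {N : ℕ} (A : Matrix (Fin N) (Fin N) ℝ) : ℝ :=
  ‖Matrix.toEuclideanCLM (𝕜 := ℝ) A‖

lemma euclNorm_nonneg {N : ℕ} (v : Fin N → ℝ) : 0 ≤ euclNorm v := norm_nonneg _

lemma matOpNorm_nonneg {N : ℕ} (A : Matrix (Fin N) (Fin N) ℝ) : 0 ≤ matOpNorm A := norm_nonneg _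

lemma coord_le_euclNorm {N : ℕ} (v : Fin N → ℝ) (i : Fin N) : |v i| ≤ euclNorm v := by
  rw [euclNorm, EuclideanSpace.norm_eq]
  rw [show |v i| = Real.sqrt ((v i)^2) by rw [Real.sqrt_sq_eq_abs]]
  apply Real.sqrt_le_sqrt
  have : ∀ j, ‖((EuclideanSpace.equiv (Fin N) ℝ).symm v) j‖ = |v j| := fun j => rfl
  simp only [this]
  calc (v i)^2 = |v i|^2 := by rw [sq_abs]
  _ ≤ ∑ j, |v j|^2 := Finset.single_le_sum (f := fun j => |v j|^2) (fun j _ => by positivity) (Finset.mem_univ i)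

lemma mulVec_euclNorm_le {N : ℕ} (A : Matrix (Fin N) (Fin N) ℝ) (b : Fin N → ℝ) :
    euclNorm (A.mulVec b) ≤ matOpNorm A * euclNorm b := by
  have key : (Matrix.toEuclideanCLM (𝕜 := ℝ) A) ((EuclideanSpace.equiv (Fin N) ℝ).symm b)
      = (EuclideanSpace.equiv (Fin N) ℝ).symm (A.mulVec b) := by
    rfl
  calc euclNorm (A.mulVec b) = ‖(Matrix.toEuclideanCLM (𝕜 := ℝ) A) ((EuclideanSpace.equiv (Fin N) ℝ).symm b)‖ := by
        rw [key]; rfl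
  _ ≤ matOpNorm A * euclNorm b := (Matrix.toEuclideanCLM (𝕜 := ℝ) A).le_opNorm _

lemma sqrt_split (c s t : ℝ) (hc : 0 ≤ c) :
    c * (Real.sqrt s * Real.sqrt t) = Real.sqrt (c*s) * Real.sqrt (c*t) := by
  rw [Real.sqrt_mul hc, Real.sqrt_mul hc]
  have h : Real.sqrt c * Real.sqrt c = c := Real.mul_self_sqrt hc
  calc c * (Real.sqrt s * Real.sqrt t)
      = (Real.sqrt c * Real.sqrt c) * (Real.sqrt s * Real.sqrt t) := by rw [h]
  _ = (Real.sqrt c * Real.sqrt s) * (Real.sqrt c * Real.sqrt t) := by ring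

/-- Theorem 2.1: Modified PhIK preserves linear constraints up to
a bounded error:
`‖L(ŷ) − ḡ‖ ≤ ε + (2ε·√(M/(M−1)) + σ_g)·‖C_MC⁻¹‖₂·‖y − μ_MC(X) − Δμ·𝟙‖₂·∑ᵢ σᵢ + ‖L(c_Δμ)‖`. -/
theorem modified_phik_error_bound
    {D : Type*} [Nonempty D] {N M : ℕ} (hM : 2 ≤ M)
    (x : Fin N → D) (Y : Fin M → D → ℝ)
    {F : Type*} [NormedAddCommGroup F] [NormedSpace ℝ F]
    (L : (D → ℝ) →ₗ[ℝ] F) (ε : ℝ) (hε : 0 ≤ ε) (g : Fin M → F)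
    (hg : ∀ m, ‖L (Y m) - g m‖ ≤ ε)
    (μMC : D → ℝ) (hμ : ∀ z, μMC z = (1 / (M : ℝ)) * ∑ m, Y m z)
    (kMC : D → D → ℝ)
    (hk : ∀ z z', kMC z z' =
      (1 / ((M : ℝ) - 1)) * ∑ m, (Y m z - μMC z) * (Y m z' - μMC z'))
    (gbar : F) (hgbar : gbar = (1 / (M : ℝ)) • ∑ m, g m)
    (σg : ℝ) (hσg : σg = Real.sqrt ((1 / ((M : ℝ) - 1)) * ∑ m, ‖g m - gbar‖ ^ 2))
    (σ : Fin N → ℝ)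
    (hσ : ∀ i, σ i = Real.sqrt
      ((1 / ((M : ℝ) - 1)) * ∑ m, (Y m (x i) - μMC (x i)) ^ 2))
    (CMC : Matrix (Fin N) (Fin N) ℝ)
    (hC : ∀ i j, CMC i j = kMC (x i) (x j)) (hCunit : IsUnit CMC)
    (y : Fin N → ℝ) (Δμ : ℝ) (ta : Fin N → ℝ)
    (hta : ta = CMC⁻¹.mulVec (y - (fun i => μMC (x i)) - fun _ => Δμ))
    (yhat : D → ℝ)
    (hyhat : ∀ z, yhat z = μMC z + Δμ + ∑ i, ta i * kMC z (x i)) :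
    ‖L yhat - gbar‖ ≤
      ε + (2 * ε * Real.sqrt ((M : ℝ) / ((M : ℝ) - 1)) + σg) *
          matOpNorm CMC⁻¹ *
          euclNorm (y - (fun i => μMC (x i)) - fun _ => Δμ) * (∑ i, σ i)
        + ‖L (fun _ => Δμ)‖ := by
  have hM2 : (2:ℝ) ≤ (M:ℝ) := by exact_mod_cast hM
  have hM1 : (0:ℝ) < (M:ℝ) - 1 := by linarith
  have hMpos : (0:ℝ) < (M:ℝ) := by linarith
  set b : Fin N → ℝ := y - (fun i => μMC (x i)) - fun _ => Δμ with hbdef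
  set K : ℝ := 2 * ε * Real.sqrt ((M : ℝ) / ((M : ℝ) - 1)) + σg with hKdef
  have hσg0 : 0 ≤ σg := hσg ▸ Real.sqrt_nonneg _
  have hK0 : 0 ≤ K := by
    have := Real.sqrt_nonneg ((M : ℝ) / ((M : ℝ) - 1)); positivity
  -- decomposition of yhat
  have hyfun : yhat = μMC + (fun _ => Δμ) + ∑ i, ta i • (fun z => kMC z (x i)) := by
    funext z
    simp only [hyhat z, Pi.add_apply, Finset.sum_apply, Pi.smul_apply, smul_eq_mul]
  have hLyhat : L yhat = L μMC + L (fun _ => Δμ) +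
      ∑ i, ta i • L (fun z => kMC z (x i)) := by
    rw [hyfun, map_add, map_add, map_sum]
    simp only [map_smul]
  -- mean bound
  have hμfun : μMC = (1/(M:ℝ)) • ∑ m, Y m := by
    funext z
    simp only [hμ z, Pi.smul_apply, Finset.sum_apply, smul_eq_mul]
  have hmean : ‖L μMC - gbar‖ ≤ ε := by
    have heq : L μMC - gbar = (1/(M:ℝ)) • ∑ m, (L (Y m) - g m) := by
      rw [hμfun, hgbar, map_smul, map_sum, ← smul_sub, ← Finset.sum_sub_distrib]
    rw [heq, norm_smul]
    have h1 : ‖∑ m, (L (Y m) - g m)‖ ≤ ∑ m : Fin M, ε :=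
      (norm_sum_le _ _).trans (Finset.sum_le_sum fun m _ => hg m)
    have h2 : ‖(1/(M:ℝ))‖ = 1/(M:ℝ) := by
      rw [Real.norm_eq_abs, abs_of_pos (by positivity)]
    rw [h2]
    calc (1/(M:ℝ)) * ‖∑ m, (L (Y m) - g m)‖ ≤ (1/(M:ℝ)) * ((M:ℝ) * ε) := by
          apply mul_le_mul_of_nonneg_left _ (by positivity)
          simpa using h1
    _ = ε := by field_simp
  -- per-m bound
  have hYm : ∀ m, ‖L (Y m) - L μMC‖ ≤ 2*ε + ‖g m - gbar‖ := by
    intro m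
    calc ‖L (Y m) - L μMC‖
        = ‖(L (Y m) - g m) + (g m - gbar) + (gbar - L μMC)‖ := by abel_nf
    _ ≤ ‖L (Y m) - g m‖ + ‖g m - gbar‖ + ‖gbar - L μMC‖ := norm_add₃_le
    _ ≤ ε + ‖g m - gbar‖ + ε := by
        have := hmean
        rw [norm_sub_rev] at this
        exact add_le_add (add_le_add (hg m) le_rfl) this
    _ = 2*ε + ‖g m - gbar‖ := by ring
  -- per-i bound on ‖L k_i‖
  have hLk : ∀ i, ‖L (fun z => kMC z (x i))‖ ≤ K * σ i := by
    intro i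
    set d : Fin M → ℝ := fun m => Y m (x i) - μMC (x i) with hd
    set Si : ℝ := ∑ m, (d m)^2 with hSi
    set Sg : ℝ := ∑ m, ‖g m - gbar‖^2 with hSg
    have hSi0 : 0 ≤ Si := Finset.sum_nonneg fun m _ => by positivity
    have hSg0 : 0 ≤ Sg := Finset.sum_nonneg fun m _ => by positivity
    have hkfun : (fun z => kMC z (x i)) =
        (1/((M:ℝ)-1)) • ∑ m, d m • (Y m - μMC) := by
      funext z
      simp only [hk z (x i), Pi.smul_apply, Finset.sum_apply, Pi.sub_apply, smul_eq_mul]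
      congr 1
      exact Finset.sum_congr rfl fun m _ => mul_comm _ _
    have hLkeq : L (fun z => kMC z (x i)) =
        (1/((M:ℝ)-1)) • ∑ m, d m • (L (Y m) - L μMC) := by
      rw [hkfun, map_smul, map_sum]
      simp only [map_smul, map_sub]
    have hnorm1 : ‖L (fun z => kMC z (x i))‖ ≤
        (1/((M:ℝ)-1)) * ∑ m, |d m| * (2*ε + ‖g m - gbar‖) := by
      rw [hLkeq, norm_smul, Real.norm_eq_abs, abs_of_pos (by positivity)]
      apply mul_le_mul_of_nonneg_left _ (by positivity)
      calc ‖∑ m, d m • (L (Y m) - L μMC)‖ ≤ ∑ m, ‖d m • (L (Y m) - L μMC)‖ :=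
            norm_sum_le _ _
      _ = ∑ m, |d m| * ‖L (Y m) - L μMC‖ := by
            simp [norm_smul, Real.norm_eq_abs]
      _ ≤ ∑ m, |d m| * (2*ε + ‖g m - gbar‖) :=
            Finset.sum_le_sum fun m _ =>
              mul_le_mul_of_nonneg_left (hYm m) (abs_nonneg _)
    have cs1 : ∑ m, |d m| ≤ Real.sqrt Si * Real.sqrt (M:ℝ) := by
      have := Real.sum_mul_le_sqrt_mul_sqrt Finset.univ (fun m => |d m|) (fun _ => (1:ℝ))
      simpa [sq_abs, ← hSi, Finset.card_univ] using this
    have cs2 : ∑ m, |d m| * ‖g m - gbar‖ ≤ Real.sqrt Si * Real.sqrt Sg := by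
      have := Real.sum_mul_le_sqrt_mul_sqrt Finset.univ (fun m => |d m|) (fun m => ‖g m - gbar‖)
      simpa [sq_abs, ← hSi, ← hSg] using this
    have hexpand : (1/((M:ℝ)-1)) * ∑ m, |d m| * (2*ε + ‖g m - gbar‖) =
        (1/((M:ℝ)-1)) * (2*ε * ∑ m, |d m| + ∑ m, |d m| * ‖g m - gbar‖) := by
      congr 1
      rw [Finset.mul_sum, ← Finset.sum_add_distrib]
      exact Finset.sum_congr rfl fun m _ => by ring
    have hsum_le : (1/((M:ℝ)-1)) * (2*ε * ∑ m, |d m| + ∑ m, |d m| * ‖g m - gbar‖) ≤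
        (1/((M:ℝ)-1)) * (2*ε * (Real.sqrt Si * Real.sqrt (M:ℝ)) + Real.sqrt Si * Real.sqrt Sg) := by
      apply mul_le_mul_of_nonneg_left _ (by positivity)
      exact add_le_add (mul_le_mul_of_nonneg_left cs1 (by positivity)) cs2
    have hc0 : (0:ℝ) ≤ 1/((M:ℝ)-1) := by positivity
    have e1 : (1/((M:ℝ)-1)) * (Real.sqrt Si * Real.sqrt (M:ℝ)) =
        Real.sqrt ((M:ℝ)/((M:ℝ)-1)) * σ i := by
      rw [hσ i, show (∑ m, (Y m (x i) - μMC (x i))^2 : ℝ) = Si from rfl,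
        sqrt_split _ Si (M:ℝ) hc0,
        show (1/((M:ℝ)-1)) * (M:ℝ) = (M:ℝ)/((M:ℝ)-1) by ring, mul_comm]
    have e2 : (1/((M:ℝ)-1)) * (Real.sqrt Si * Real.sqrt Sg) = σg * σ i := by
      rw [hσ i, show (∑ m, (Y m (x i) - μMC (x i))^2 : ℝ) = Si from rfl,
        sqrt_split _ Si Sg hc0, mul_comm, hσg]
    calc ‖L (fun z => kMC z (x i))‖
        ≤ (1/((M:ℝ)-1)) * (2*ε * (Real.sqrt Si * Real.sqrt (M:ℝ)) + Real.sqrt Si * Real.sqrt Sg) := by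
          rw [hexpand] at hnorm1; exact hnorm1.trans hsum_le
    _ = 2*ε * ((1/((M:ℝ)-1)) * (Real.sqrt Si * Real.sqrt (M:ℝ))) +
        (1/((M:ℝ)-1)) * (Real.sqrt Si * Real.sqrt Sg) := by ring
    _ = 2*ε * (Real.sqrt ((M:ℝ)/((M:ℝ)-1)) * σ i) + σg * σ i := by rw [e1, e2]
    _ = K * σ i := by rw [hKdef]; ring
  -- bound on coordinates of ta
  have hta_i : ∀ i, |ta i| ≤ matOpNorm CMC⁻¹ * euclNorm b := by
    intro i
    calc |ta i| ≤ euclNorm ta := coord_le_euclNorm ta i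
    _ ≤ matOpNorm CMC⁻¹ * euclNorm b := by
        rw [hta]; exact mulVec_euclNorm_le _ _
  have hσ0 : ∀ i, 0 ≤ σ i := fun i => (hσ i) ▸ Real.sqrt_nonneg _
  -- combine
  have hsum : ‖∑ i, ta i • L (fun z => kMC z (x i))‖ ≤
      matOpNorm CMC⁻¹ * euclNorm b * (K * ∑ i, σ i) := by
    calc ‖∑ i, ta i • L (fun z => kMC z (x i))‖
        ≤ ∑ i, ‖ta i • L (fun z => kMC z (x i))‖ := norm_sum_le _ _
    _ = ∑ i, |ta i| * ‖L (fun z => kMC z (x i))‖ := by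
        simp [norm_smul, Real.norm_eq_abs]
    _ ≤ ∑ i, (matOpNorm CMC⁻¹ * euclNorm b) * (K * σ i) := by
        apply Finset.sum_le_sum
        intro i _
        exact mul_le_mul (hta_i i) (hLk i) (norm_nonneg _)
          (mul_nonneg (matOpNorm_nonneg _) (euclNorm_nonneg _))
    _ = matOpNorm CMC⁻¹ * euclNorm b * (K * ∑ i, σ i) := by
        rw [Finset.mul_sum, ← Finset.mul_sum]
  have hdecomp : L yhat - gbar = (L μMC - gbar) +
      (∑ i, ta i • L (fun z => kMC z (x i))) + L (fun _ => Δμ) := by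
    rw [hLyhat]; abel
  calc ‖L yhat - gbar‖
      ≤ ‖L μMC - gbar‖ + ‖∑ i, ta i • L (fun z => kMC z (x i))‖ + ‖L (fun _ => Δμ)‖ := by
        rw [hdecomp]; exact norm_add₃_le
  _ ≤ ε + matOpNorm CMC⁻¹ * euclNorm b * (K * ∑ i, σ i) + ‖L (fun _ => Δμ)‖ :=
        add_le_add (add_le_add hmean hsum) le_rfl
  _ = ε + K * matOpNorm CMC⁻¹ * euclNorm b * (∑ i, σ i) + ‖L (fun _ => Δμ)‖ := by ring
end

section
/- Column bound for the ensemble covariance kernel: under the stated assumptions, for every x′ ∈ D, ‖L(k_MC(·, x′))‖ ≤ (2ε·√(M/(M−1)) + σ_g)·σ(x′), where k_MC(·, x′) denotes the function x ↦ k_MC(x, x′) and σ(x′) = ((1/(M−1))·∑_{m=1}^M (Yᵐ(x′) − μ_MC(x′))²)^{1/2} is the ensemble standard deviation at x′. -/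
/-- Column bound for the ensemble covariance kernel: for every
`x′ ∈ D`, `‖L(k_MC(·, x′))‖ ≤ (2ε·√(M/(M−1)) + σ_g)·σ(x′)`. -/
theorem kernel_column_bound
    {D : Type*} [Nonempty D] {M : ℕ} (hM : 2 ≤ M)
    (Y : Fin M → D → ℝ)
    {F : Type*} [NormedAddCommGroup F] [NormedSpace ℝ F]
    (L : (D → ℝ) →ₗ[ℝ] F) (ε : ℝ) (hε : 0 ≤ ε) (g : Fin M → F)
    (hg : ∀ m, ‖L (Y m) - g m‖ ≤ ε)
    (μMC : D → ℝ) (hμ : ∀ z, μMC z = (1 / (M : ℝ)) * ∑ m, Y m z)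
    (kMC : D → D → ℝ)
    (hk : ∀ z z', kMC z z' =
      (1 / ((M : ℝ) - 1)) * ∑ m, (Y m z - μMC z) * (Y m z' - μMC z'))
    (gbar : F) (hgbar : gbar = (1 / (M : ℝ)) • ∑ m, g m)
    (σg : ℝ) (hσg : σg = Real.sqrt ((1 / ((M : ℝ) - 1)) * ∑ m, ‖g m - gbar‖ ^ 2))
    (σ : D → ℝ)
    (hσ : ∀ z, σ z = Real.sqrt ((1 / ((M : ℝ) - 1)) * ∑ m, (Y m z - μMC z) ^ 2)) :
    ∀ x' : D, ‖L (fun z => kMC z x')‖ ≤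
      (2 * ε * Real.sqrt ((M : ℝ) / ((M : ℝ) - 1)) + σg) * σ x' := by
  intro x'
  have hMR : (2:ℝ) ≤ (M:ℝ) := by exact_mod_cast hM
  set m1 : ℝ := (M : ℝ) - 1 with hm1
  have hm1pos : 0 < m1 := by simp only [hm1]; linarith
  have hMpos : (0:ℝ) < (M:ℝ) := by linarith
  set c : Fin M → ℝ := fun m => Y m x' - μMC x' with hc
  have hcsum : ∑ m, c m = 0 := by
    simp only [hc, Finset.sum_sub_distrib, Finset.sum_const, Finset.card_univ,
      Fintype.card_fin, nsmul_eq_mul, hμ]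
    field_simp
    ring
  -- the column function
  have hfun : (fun z => kMC z x') = (1/m1) • ∑ m, c m • (Y m - μMC) := by
    funext z
    simp only [hk, hc, Pi.smul_apply, Finset.sum_apply, Pi.sub_apply, smul_eq_mul]
    congr 1
    exact Finset.sum_congr rfl fun m _ => mul_comm _ _
  have hL1 : L (fun z => kMC z x') = (1/m1) • ∑ m, c m • (L (Y m) - L μMC) := by
    rw [hfun, map_smul, map_sum]
    congr 1
    refine Finset.sum_congr rfl fun m _ => ?_
    rw [map_smul, map_sub]
  have hL2 : ∑ m, c m • (L (Y m) - L μMC) = ∑ m, c m • L (Y m) := by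
    simp only [smul_sub, Finset.sum_sub_distrib, ← Finset.sum_smul, hcsum, zero_smul,
      sub_zero]
  have hL3 : ∑ m, c m • L (Y m)
      = ∑ m, c m • (L (Y m) - g m) + ∑ m, c m • (g m - gbar) := by
    rw [← Finset.sum_add_distrib]
    have key : ∀ m : Fin M, c m • (L (Y m) - g m) + c m • (g m - gbar)
        = c m • L (Y m) - c m • gbar := by
      intro m; simp only [smul_sub]; abel
    simp only [key, Finset.sum_sub_distrib, ← Finset.sum_smul, hcsum, zero_smul, sub_zero]
  set A : ℝ := Real.sqrt (∑ m, c m ^ 2) with hA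
  set B : ℝ := Real.sqrt (∑ m, ‖g m - gbar‖ ^ 2) with hB
  have hAnn : 0 ≤ A := Real.sqrt_nonneg _
  have hBnn : 0 ≤ B := Real.sqrt_nonneg _
  have hsM : 0 ≤ Real.sqrt (M:ℝ) := Real.sqrt_nonneg _
  -- Cauchy–Schwarz bounds
  have hCS1 : ∑ m, |c m| * ‖g m - gbar‖ ≤ A * B := by
    have h := Real.sum_mul_le_sqrt_mul_sqrt Finset.univ (fun m => |c m|)
      (fun m => ‖g m - gbar‖)
    simpa [sq_abs] using h
  have hCS2 : ∑ m, |c m| ≤ Real.sqrt (M : ℝ) * A := by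
    have h := Real.sum_mul_le_sqrt_mul_sqrt Finset.univ (fun _ : Fin M => (1:ℝ))
      (fun m => |c m|)
    simpa [sq_abs] using h
  -- norm bounds
  have hnorm1 : ‖∑ m, c m • (L (Y m) - g m)‖ ≤ (∑ m, |c m|) * ε := by
    calc ‖∑ m, c m • (L (Y m) - g m)‖ ≤ ∑ m, ‖c m • (L (Y m) - g m)‖ :=
          norm_sum_le _ _
      _ ≤ ∑ m, |c m| * ε := by
          refine Finset.sum_le_sum fun m _ => ?_
          rw [norm_smul, Real.norm_eq_abs]
          exact mul_le_mul_of_nonneg_left (hg m) (abs_nonneg _)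
      _ = (∑ m, |c m|) * ε := by rw [Finset.sum_mul]
  have hnorm2 : ‖∑ m, c m • (g m - gbar)‖ ≤ A * B := by
    calc ‖∑ m, c m • (g m - gbar)‖ ≤ ∑ m, ‖c m • (g m - gbar)‖ := norm_sum_le _ _
      _ = ∑ m, |c m| * ‖g m - gbar‖ := by simp [norm_smul, Real.norm_eq_abs]
      _ ≤ A * B := hCS1
  have hkey : ‖L (fun z => kMC z x')‖
      ≤ (1/m1) * (Real.sqrt (M:ℝ) * A * ε + A * B) := by
    rw [hL1, hL2, hL3, norm_smul, Real.norm_eq_abs,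
      abs_of_pos (by positivity : (0:ℝ) < 1/m1)]
    refine mul_le_mul_of_nonneg_left ?_ (by positivity)
    calc ‖∑ m, c m • (L (Y m) - g m) + ∑ m, c m • (g m - gbar)‖
        ≤ ‖∑ m, c m • (L (Y m) - g m)‖ + ‖∑ m, c m • (g m - gbar)‖ := norm_add_le _ _
      _ ≤ (∑ m, |c m|) * ε + A * B := add_le_add hnorm1 hnorm2
      _ ≤ Real.sqrt (M:ℝ) * A * ε + A * B := by
          have h := mul_le_mul_of_nonneg_right hCS2 hε
          linarith
  -- rewrite σ, σg, and the ratio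
  have hsqrt_frac : Real.sqrt (1/m1) = 1 / Real.sqrt m1 := by
    rw [one_div, one_div, Real.sqrt_inv]
  have hσx : σ x' = A / Real.sqrt m1 := by
    rw [hσ, show (∑ m, (Y m x' - μMC x') ^ 2) = ∑ m, c m ^ 2 from rfl,
      Real.sqrt_mul (by positivity), hsqrt_frac, ← hA]
    try ring
  have hσgB : σg = B / Real.sqrt m1 := by
    rw [hσg, Real.sqrt_mul (by positivity), hsqrt_frac, ← hB]
    try ring
  have hsqm1 : Real.sqrt m1 * Real.sqrt m1 = m1 := Real.mul_self_sqrt hm1pos.le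
  have hsqm1pos : 0 < Real.sqrt m1 := Real.sqrt_pos.mpr hm1pos
  have hratio : Real.sqrt ((M:ℝ) / m1) = Real.sqrt (M:ℝ) / Real.sqrt m1 :=
    Real.sqrt_div hMpos.le _
  refine hkey.trans ?_
  rw [hσx, hσgB, hratio]
  have h2 : (2 * ε * (Real.sqrt (M:ℝ) / Real.sqrt m1) + B / Real.sqrt m1)
      * (A / Real.sqrt m1) = (2 * ε * Real.sqrt (M:ℝ) + B) * A / m1 := by
    rw [← hsqm1]; field_simp; rw [Real.sqrt_sq hsqm1pos.le]; try ring
  rw [h2]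
  have hX : Real.sqrt (M:ℝ) * A * ε + A * B ≤ (2 * ε * Real.sqrt (M:ℝ) + B) * A := by
    nlinarith [mul_nonneg (mul_nonneg hsM hAnn) hε]
  calc (1/m1) * (Real.sqrt (M:ℝ) * A * ε + A * B)
      ≤ (1/m1) * ((2 * ε * Real.sqrt (M:ℝ) + B) * A) :=
        mul_le_mul_of_nonneg_left hX (by positivity)
    _ = (2 * ε * Real.sqrt (M:ℝ) + B) * A / m1 := by ring
end

section
/- Block formula for the inverse covariance applied to the residual vector: let C₁ and C₂ be invertible N×N real matrices, ρ, μ_d ∈ ℝ, and y_L, y_H, μ_L ∈ ℝᴺ. Set μ_H = ρ·μ_L + μ_d·𝟙, where 𝟙 is the all-ones vector, and let C̃ = [[C₁, ρ·C₁], [ρ·C₁, ρ²·C₁ + C₂]]. Then C̃⁻¹ applied to the concatenated vector (y_L − μ_L, y_H − μ_H) equals the concatenated vector (C₁⁻¹(y_L − μ_L) − ρ·C₂⁻¹(y_H − ρ·y_L − μ_d·𝟙), C₂⁻¹(y_H − ρ·y_L − μ_d·𝟙)). -/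
/-- Block formula for the inverse covariance applied to the
residual vector: with `μ_H = ρ·μ_L + μ_d·𝟙` and
`C̃ = [[C₁, ρ·C₁], [ρ·C₁, ρ²·C₁ + C₂]]`, one has
`C̃⁻¹ (y_L − μ_L, y_H − μ_H) =
  (C₁⁻¹(y_L − μ_L) − ρ·C₂⁻¹(y_H − ρ·y_L − μ_d·𝟙), C₂⁻¹(y_H − ρ·y_L − μ_d·𝟙))`. -/
theorem block_inverse_applied_to_residual
    {N : ℕ} (C₁ C₂ : Matrix (Fin N) (Fin N) ℝ)
    (hC₁ : IsUnit C₁) (hC₂ : IsUnit C₂) (ρ μd : ℝ)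
    (yL yH μL : Fin N → ℝ)
    (μH : Fin N → ℝ) (hμH : μH = ρ • μL + fun _ => μd)
    (Ct : Matrix (Fin N ⊕ Fin N) (Fin N ⊕ Fin N) ℝ)
    (hCt : Ct = Matrix.fromBlocks C₁ (ρ • C₁) (ρ • C₁) (ρ ^ 2 • C₁ + C₂)) :
    Ct⁻¹.mulVec (Sum.elim (yL - μL) (yH - μH)) =
      Sum.elim
        (C₁⁻¹.mulVec (yL - μL) - ρ • C₂⁻¹.mulVec (yH - ρ • yL - fun _ => μd))
        (C₂⁻¹.mulVec (yH - ρ • yL - fun _ => μd)) := by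
  have hd1 : IsUnit C₁.det := (Matrix.isUnit_iff_isUnit_det C₁).mp hC₁
  have hd2 : IsUnit C₂.det := (Matrix.isUnit_iff_isUnit_det C₂).mp hC₂
  haveI : Invertible C₁ := hC₁.invertible
  haveI : Invertible C₂ := hC₂.invertible
  -- Ct is invertible
  have hdet : IsUnit Ct.det := by
    rw [hCt, Matrix.det_fromBlocks₁₁]
    have : (ρ ^ 2 • C₁ + C₂) - (ρ • C₁) * ⅟C₁ * (ρ • C₁) = C₂ := by
      rw [Matrix.smul_mul, mul_invOf_self, Matrix.mul_smul, Matrix.smul_mul,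
        Matrix.one_mul, smul_smul, ← pow_two]
      abel
    rw [this]
    exact hd1.mul hd2
  have hCtU : IsUnit Ct := (Matrix.isUnit_iff_isUnit_det Ct).mpr hdet
  set u := yL - μL with hu
  set w := yH - ρ • yL - fun _ => μd with hw
  set x := Sum.elim (C₁⁻¹.mulVec u - ρ • C₂⁻¹.mulVec w) (C₂⁻¹.mulVec w) with hx
  have hC1 : C₁ * C₁⁻¹ = 1 := Matrix.mul_nonsing_inv C₁ hd1
  have hC2 : C₂ * C₂⁻¹ = 1 := Matrix.mul_nonsing_inv C₂ hd2
  have key : Ct.mulVec x = Sum.elim (yL - μL) (yH - μH) := by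
    rw [hCt, hx, Matrix.fromBlocks_mulVec, Sum.elim_comp_inl, Sum.elim_comp_inr]
    funext i
    cases i with
    | inl i =>
      simp only [Sum.elim_inl]
      have h1 : C₁.mulVec (C₁⁻¹.mulVec u - ρ • C₂⁻¹.mulVec w)
          = u - ρ • (C₁ * C₂⁻¹).mulVec w := by
        rw [Matrix.mulVec_sub, Matrix.mulVec_smul, Matrix.mulVec_mulVec, hC1,
          Matrix.one_mulVec, Matrix.mulVec_mulVec]
      have h2 : (ρ • C₁).mulVec (C₂⁻¹.mulVec w) = ρ • (C₁ * C₂⁻¹).mulVec w := by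
        rw [Matrix.smul_mulVec, Matrix.mulVec_mulVec]
      rw [h1, h2]
      simp [hu]
    | inr i =>
      simp only [Sum.elim_inr]
      have h1 : (ρ • C₁).mulVec (C₁⁻¹.mulVec u - ρ • C₂⁻¹.mulVec w)
          = ρ • u - (ρ ^ 2) • (C₁ * C₂⁻¹).mulVec w := by
        rw [Matrix.smul_mulVec, Matrix.mulVec_sub, Matrix.mulVec_smul,
          Matrix.mulVec_mulVec, hC1, Matrix.one_mulVec, Matrix.mulVec_mulVec,
          smul_sub, smul_smul, ← pow_two]
      have h2 : (ρ ^ 2 • C₁ + C₂).mulVec (C₂⁻¹.mulVec w)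
          = (ρ ^ 2) • (C₁ * C₂⁻¹).mulVec w + w := by
        rw [Matrix.add_mulVec, Matrix.smul_mulVec, Matrix.mulVec_mulVec,
          Matrix.mulVec_mulVec, hC2, Matrix.one_mulVec]
      rw [h1, h2]
      simp only [hu, hw, hμH, Pi.sub_apply, Pi.add_apply, Pi.smul_apply, smul_eq_mul]
      ring
  rw [← key, Matrix.mulVec_mulVec, Matrix.nonsing_inv_mul Ct hdet, Matrix.one_mulVec, hx]
end

section
/- Decomposition of the CoPhIK posterior mean (Eq. 2.29): let D be a nonempty set with points x⁽¹⁾, …, x⁽ᴺ⁾ ∈ D, let k_L, k_d : D × D → ℝ be kernels with C₁ = (k_L(x⁽ⁱ⁾, x⁽ʲ⁾))ᵢⱼ and C₂ = (k_d(x⁽ⁱ⁾, x⁽ʲ⁾))ᵢⱼ invertible N×N matrices, let ρ, μ_d ∈ ℝ, μ_L : D → ℝ, and y_L, y_H ∈ ℝᴺ. Write μ_L(X) = (μ_L(x⁽¹⁾), …, μ_L(x⁽ᴺ⁾))ᵀ, 𝟙 for the all-ones vector, C̃ = [[C₁, ρ·C₁], [ρ·C₁, ρ²·C₁ + C₂]],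 ỹ − μ̃ for the concatenated vector (y_L − μ_L(X), y_H − ρ·μ_L(X) − μ_d·𝟙), and c̃(x) for the concatenated vector (ρ·c_L(x), ρ²·c_L(x) + c_d(x)) where c_L(x)ᵢ = k_L(x, x⁽ⁱ⁾) and c_d(x)ᵢ = k_d(x, x⁽ⁱ⁾). Then for every x ∈ D, the posterior mean ŷ(x) = ρ·μ_L(x) + μ_d + c̃(x)ᵀ·C̃⁻¹·(ỹ − μ̃) equals ρ·(μ_L(x) + ∑_{i=1}^N aᵢ·k_L(x, x⁽ⁱ⁾)) − ρ·∑_{i=1}^N bᵢ·k_L(x, x⁽ⁱ⁾) + μ_d + ∑_{i=1}^N qᵢ·k_d(x, x⁽ⁱ⁾), where a = C₁⁻¹(y_H − μ_L(X)), b = C₁⁻¹(y_H − y_L), and q = C₂⁻¹(y_H − ρ·y_L − μ_d·𝟙). -/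
open Matrix

/-- Eq. 2.29: Decomposition of the CoPhIK posterior mean:
`ŷ(x) = ρ·μ_L(x) + μ_d + c̃(x)ᵀ·C̃⁻¹·(ỹ − μ̃)` equals
`ρ·(μ_L(x) + ∑ᵢ aᵢ·k_L(x, x⁽ⁱ⁾)) − ρ·∑ᵢ bᵢ·k_L(x, x⁽ⁱ⁾) + μ_d + ∑ᵢ qᵢ·k_d(x, x⁽ⁱ⁾)`. -/
theorem cophik_posterior_mean_decomposition
    {D : Type*} [Nonempty D] {N : ℕ} (x : Fin N → D)
    (kL kd : D → D → ℝ)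
    (C₁ C₂ : Matrix (Fin N) (Fin N) ℝ)
    (hC₁ : ∀ i j, C₁ i j = kL (x i) (x j))
    (hC₂ : ∀ i j, C₂ i j = kd (x i) (x j))
    (hC₁unit : IsUnit C₁) (hC₂unit : IsUnit C₂)
    (ρ μd : ℝ) (μL : D → ℝ) (yL yH : Fin N → ℝ)
    (Ct : Matrix (Fin N ⊕ Fin N) (Fin N ⊕ Fin N) ℝ)
    (hCt : Ct = Matrix.fromBlocks C₁ (ρ • C₁) (ρ • C₁) (ρ ^ 2 • C₁ + C₂))
    (res : Fin N ⊕ Fin N → ℝ)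
    (hres : res = Sum.elim (yL - fun i => μL (x i))
      (yH - ρ • (fun i => μL (x i)) - fun _ => μd))
    (cL cd : D → Fin N → ℝ)
    (hcL : ∀ z i, cL z i = kL z (x i))
    (hcd : ∀ z i, cd z i = kd z (x i))
    (ct : D → Fin N ⊕ Fin N → ℝ)
    (hct : ∀ z, ct z = Sum.elim (ρ • cL z) (ρ ^ 2 • cL z + cd z))
    (a b q : Fin N → ℝ)
    (ha : a = C₁⁻¹.mulVec (yH - fun i => μL (x i)))
    (hb : b = C₁⁻¹.mulVec (yH - yL))
    (hq : q = C₂⁻¹.mulVec (yH - ρ • yL - fun _ => μd))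
    (yhat : D → ℝ)
    (hyhat : ∀ z, yhat z = ρ * μL z + μd + ct z ⬝ᵥ Ct⁻¹.mulVec res) :
    ∀ z, yhat z =
      ρ * (μL z + ∑ i, a i * kL z (x i)) - ρ * ∑ i, b i * kL z (x i)
        + μd + ∑ i, q i * kd z (x i) := by
  intro z
  have hdet₁ : IsUnit C₁.det := (Matrix.isUnit_iff_isUnit_det C₁).mp hC₁unit
  have hdet₂ : IsUnit C₂.det := (Matrix.isUnit_iff_isUnit_det C₂).mp hC₂unit
  have h1 : C₁ * C₁⁻¹ = 1 := Matrix.mul_nonsing_inv C₁ hdet₁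
  have h2 : C₂ * C₂⁻¹ = 1 := Matrix.mul_nonsing_inv C₂ hdet₂
  set M := Matrix.fromBlocks (C₁⁻¹ + ρ ^ 2 • C₂⁻¹) (-(ρ • C₂⁻¹)) (-(ρ • C₂⁻¹)) C₂⁻¹ with hM
  have b11 : C₁ * (C₁⁻¹ + ρ ^ 2 • C₂⁻¹) + (ρ • C₁) * (-(ρ • C₂⁻¹)) = 1 := by
    simp only [Matrix.mul_add, Matrix.mul_neg, Matrix.mul_smul, Matrix.smul_mul, h1, h2,
      smul_smul, pow_two]
    module
  have b12 : C₁ * (-(ρ • C₂⁻¹)) + (ρ • C₁) * C₂⁻¹ = 0 := by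
    simp only [Matrix.mul_neg, Matrix.mul_smul, Matrix.smul_mul]
    module
  have b21 : (ρ • C₁) * (C₁⁻¹ + ρ ^ 2 • C₂⁻¹) + (ρ ^ 2 • C₁ + C₂) * (-(ρ • C₂⁻¹)) = 0 := by
    simp only [Matrix.mul_add, Matrix.add_mul, Matrix.mul_neg, Matrix.mul_smul,
      Matrix.smul_mul, h1, h2, smul_smul, pow_two]
    module
  have b22 : (ρ • C₁) * (-(ρ • C₂⁻¹)) + (ρ ^ 2 • C₁ + C₂) * C₂⁻¹ = 1 := by
    simp only [Matrix.add_mul, Matrix.mul_neg, Matrix.mul_smul, Matrix.smul_mul, h1, h2,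
      smul_smul, pow_two]
    module
  have hinv : Ct⁻¹ = M := by
    apply Matrix.inv_eq_right_inv
    rw [hCt, hM, Matrix.fromBlocks_multiply, b11, b12, b21, b22, Matrix.fromBlocks_one]
  set r₁ : Fin N → ℝ := yL - fun i => μL (x i) with hr₁
  set r₂ : Fin N → ℝ := yH - ρ • (fun i => μL (x i)) - fun _ => μd with hr₂
  have harg : r₂ - ρ • r₁ = yH - ρ • yL - fun _ => μd := by
    funext i
    simp only [hr₁, hr₂, Pi.sub_apply, Pi.smul_apply, smul_eq_mul]
    ring
  have hqr : C₂⁻¹.mulVec r₂ - ρ • C₂⁻¹.mulVec r₁ = q := by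
    rw [← Matrix.mulVec_smul, ← Matrix.mulVec_sub, harg, hq]
  have harg1 : (yH - fun i => μL (x i)) - (yH - yL) = r₁ := by
    funext i
    simp only [hr₁, Pi.sub_apply]
    ring
  have hab : a - b = C₁⁻¹.mulVec r₁ := by
    rw [ha, hb, ← Matrix.mulVec_sub, harg1]
  have comp1 : (C₁⁻¹ + ρ ^ 2 • C₂⁻¹) *ᵥ r₁ + (-(ρ • C₂⁻¹)) *ᵥ r₂ = (a - b) - ρ • q := by
    rw [hab, ← hqr, Matrix.add_mulVec, Matrix.neg_mulVec, Matrix.smul_mulVec,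
      Matrix.smul_mulVec]
    simp only [smul_sub, smul_smul, pow_two]
    module
  have comp2 : (-(ρ • C₂⁻¹)) *ᵥ r₁ + C₂⁻¹ *ᵥ r₂ = q := by
    rw [← hqr, Matrix.neg_mulVec, Matrix.smul_mulVec]
    module
  have hmv : Ct⁻¹.mulVec res = Sum.elim ((a - b) - ρ • q) q := by
    rw [hinv, hres, hM, Matrix.fromBlocks_mulVec]
    simp only [Sum.elim_comp_inl, Sum.elim_comp_inr]
    rw [comp1, comp2]
  rw [hyhat z, hmv, hct z, sumElim_dotProduct_sumElim]
  simp only [← hcL, ← hcd]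
  have e1 : ∀ v : Fin N → ℝ, ∑ i, v i * cL z i = cL z ⬝ᵥ v := fun v => by
    simp only [dotProduct]
    exact Finset.sum_congr rfl fun i _ => mul_comm _ _
  have e2 : ∑ i, q i * cd z i = cd z ⬝ᵥ q := by
    simp only [dotProduct]
    exact Finset.sum_congr rfl fun i _ => mul_comm _ _
  rw [e1 a, e1 b, e2]
  simp only [smul_dotProduct, add_dotProduct, dotProduct_sub,
    dotProduct_smul, smul_eq_mul]
  ring
end

section
/- CoPhIK posterior mean when the low-fidelity data equals its mean (Eq. 2.36): in the setting of the CoPhIK posterior mean decomposition, if y_L = μ_L(X), then for every x ∈ D, ŷ(x) = ρ·μ_L(x) + μ_d + ∑_{i=1}^N (C₂⁻¹(y_H − ρ·μ_L(X) − μ_d·𝟙))ᵢ · k_d(x, x⁽ⁱ⁾); i.e., the posterior mean equals μ_H(x) plus a weighted sum of the discrepancy kernel columns alone, with no k_L contribution. -/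
open Matrix

/-- Eq. 2.36: CoPhIK posterior mean when the low-fidelity data
equals its mean: if `y_L = μ_L(X)`, then for every `x ∈ D`,
`ŷ(x) = ρ·μ_L(x) + μ_d + ∑ᵢ (C₂⁻¹(y_H − ρ·μ_L(X) − μ_d·𝟙))ᵢ · k_d(x, x⁽ⁱ⁾)`. -/
theorem cophik_posterior_mean_low_fidelity_mean
    {D : Type*} [Nonempty D] {N : ℕ} (x : Fin N → D)
    (kL kd : D → D → ℝ)
    (C₁ C₂ : Matrix (Fin N) (Fin N) ℝ)
    (hC₁ : ∀ i j, C₁ i j = kL (x i) (x j))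
    (hC₂ : ∀ i j, C₂ i j = kd (x i) (x j))
    (hC₁unit : IsUnit C₁) (hC₂unit : IsUnit C₂)
    (ρ μd : ℝ) (μL : D → ℝ) (yL yH : Fin N → ℝ)
    (Ct : Matrix (Fin N ⊕ Fin N) (Fin N ⊕ Fin N) ℝ)
    (hCt : Ct = Matrix.fromBlocks C₁ (ρ • C₁) (ρ • C₁) (ρ ^ 2 • C₁ + C₂))
    (res : Fin N ⊕ Fin N → ℝ)
    (hres : res = Sum.elim (yL - fun i => μL (x i))
      (yH - ρ • (fun i => μL (x i)) - fun _ => μd))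
    (cL cd : D → Fin N → ℝ)
    (hcL : ∀ z i, cL z i = kL z (x i))
    (hcd : ∀ z i, cd z i = kd z (x i))
    (ct : D → Fin N ⊕ Fin N → ℝ)
    (hct : ∀ z, ct z = Sum.elim (ρ • cL z) (ρ ^ 2 • cL z + cd z))
    (yhat : D → ℝ)
    (hyhat : ∀ z, yhat z = ρ * μL z + μd + ct z ⬝ᵥ Ct⁻¹.mulVec res)
    (hyL : yL = fun i => μL (x i)) :
    ∀ z, yhat z = ρ * μL z + μd +
      ∑ i, (C₂⁻¹.mulVec (yH - ρ • (fun i => μL (x i)) - fun _ => μd)) i *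
        kd z (x i) := by
  have hd₁ : IsUnit C₁.det := (Matrix.isUnit_iff_isUnit_det C₁).mp hC₁unit
  have hd₂ : IsUnit C₂.det := (Matrix.isUnit_iff_isUnit_det C₂).mp hC₂unit
  -- Ct is invertible (determinant = det C₁ * det C₂)
  haveI : Invertible C₁ := C₁.invertibleOfIsUnitDet hd₁
  have hSchur : (ρ ^ 2 • C₁ + C₂) - (ρ • C₁) * ⅟C₁ * (ρ • C₁) = C₂ := by
    have h1 : (ρ • C₁) * ⅟C₁ * (ρ • C₁) = ρ ^ 2 • (C₁ * ⅟C₁ * C₁) := by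
      simp [Matrix.smul_mul, Matrix.mul_smul, smul_smul, sq]
    rw [h1, mul_invOf_self, Matrix.one_mul]
    abel
  have hdetCt : Ct.det = C₁.det * C₂.det := by
    rw [hCt, Matrix.det_fromBlocks₁₁, hSchur]
  have hCtdet : IsUnit Ct.det := by
    rw [hdetCt]; exact hd₁.mul hd₂
  set v : Fin N → ℝ := yH - ρ • (fun i => μL (x i)) - fun _ => μd with hv
  set w : Fin N → ℝ := C₂⁻¹.mulVec v with hw
  have hC₂w : C₂.mulVec w = v := by
    rw [hw, Matrix.mulVec_mulVec, Matrix.mul_nonsing_inv _ hd₂, Matrix.one_mulVec]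
  have hres0 : res = Sum.elim (0 : Fin N → ℝ) v := by
    rw [hres, hyL]; simp
  set u : Fin N ⊕ Fin N → ℝ := Sum.elim (-ρ • w) w with hu
  have hCtu : Ct.mulVec u = res := by
    rw [hCt, hu, hres0, Matrix.fromBlocks_mulVec]
    have hadd : ((ρ * ρ) • C₁ + C₂).mulVec w = (ρ * ρ) • C₁.mulVec w + v := by
      rw [Matrix.add_mulVec, Matrix.smul_mulVec, hC₂w]
    ext (i | i) <;>
      simp [hadd, Matrix.mulVec_neg, Matrix.mulVec_smul, Matrix.smul_mulVec,
        smul_smul, sq]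
  have hinv : Ct⁻¹.mulVec res = u := by
    rw [← hCtu, Matrix.mulVec_mulVec, Matrix.nonsing_inv_mul _ hCtdet, Matrix.one_mulVec]
  intro z
  rw [hyhat, hinv, hct, hu]
  congr 1
  have : Sum.elim (ρ • cL z) (ρ ^ 2 • cL z + cd z) ⬝ᵥ Sum.elim (-ρ • w) w
      = (ρ • cL z) ⬝ᵥ (-ρ • w) + (ρ ^ 2 • cL z + cd z) ⬝ᵥ w := by
    simp [dotProduct, Fintype.sum_sum_type]
  rw [this]
  have h2 : (ρ • cL z) ⬝ᵥ (-ρ • w) = -(ρ ^ 2) * (cL z ⬝ᵥ w) := by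
    simp only [dotProduct, Pi.smul_apply, Pi.neg_apply, smul_eq_mul,
      Finset.mul_sum]
    apply Finset.sum_congr rfl
    intro i _
    ring
  rw [h2, add_dotProduct, smul_dotProduct]
  have : cd z ⬝ᵥ w = ∑ i, w i * kd z (x i) := by
    simp [dotProduct, hcd, mul_comm]
  rw [this, smul_eq_mul]
  ring
end

section
/- PhIK preserves linear constraints up to a bounded error (the Δμ = 0 case of Theorem 2.1): under the stated assumptions, let y ∈ ℝᴺ be a vector of observations, ã = C_MC⁻¹(y − μ_MC(X)) ∈ ℝᴺ where μ_MC(X) = (μ_MC(x⁽¹⁾), …, μ_MC(x⁽ᴺ⁾))ᵀ, and define the PhIK prediction ŷ : D → ℝ by ŷ(x) = μ_MC(x) + ∑_{i=1}^N ãᵢ·k_MC(x, x⁽ⁱ⁾). Then ‖L(ŷ) − ḡ‖ ≤ ε + (2ε·√(M/(M−1)) + σ_g)·‖C_MC⁻¹‖₂·‖y − μ_MC(X)‖₂·∑_{i=1}^N σᵢ. -/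
/-- PhIK preserves linear constraints up to a bounded error
(the `Δμ = 0` case of Theorem 2.1):
`‖L(ŷ) − ḡ‖ ≤ ε + (2ε·√(M/(M−1)) + σ_g)·‖C_MC⁻¹‖₂·‖y − μ_MC(X)‖₂·∑ᵢ σᵢ`. -/
theorem phik_error_bound
    {D : Type*} [Nonempty D] {N M : ℕ} (hM : 2 ≤ M)
    (x : Fin N → D) (Y : Fin M → D → ℝ)
    {F : Type*} [NormedAddCommGroup F] [NormedSpace ℝ F]
    (L : (D → ℝ) →ₗ[ℝ] F) (ε : ℝ) (hε : 0 ≤ ε) (g : Fin M → F)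
    (hg : ∀ m, ‖L (Y m) - g m‖ ≤ ε)
    (μMC : D → ℝ) (hμ : ∀ z, μMC z = (1 / (M : ℝ)) * ∑ m, Y m z)
    (kMC : D → D → ℝ)
    (hk : ∀ z z', kMC z z' =
      (1 / ((M : ℝ) - 1)) * ∑ m, (Y m z - μMC z) * (Y m z' - μMC z'))
    (gbar : F) (hgbar : gbar = (1 / (M : ℝ)) • ∑ m, g m)
    (σg : ℝ) (hσg : σg = Real.sqrt ((1 / ((M : ℝ) - 1)) * ∑ m, ‖g m - gbar‖ ^ 2))
    (σ : Fin N → ℝ)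
    (hσ : ∀ i, σ i = Real.sqrt
      ((1 / ((M : ℝ) - 1)) * ∑ m, (Y m (x i) - μMC (x i)) ^ 2))
    (CMC : Matrix (Fin N) (Fin N) ℝ)
    (hC : ∀ i j, CMC i j = kMC (x i) (x j)) (hCunit : IsUnit CMC)
    (y : Fin N → ℝ) (ta : Fin N → ℝ)
    (hta : ta = CMC⁻¹.mulVec (y - fun i => μMC (x i)))
    (yhat : D → ℝ)
    (hyhat : ∀ z, yhat z = μMC z + ∑ i, ta i * kMC z (x i)) :
    ‖L yhat - gbar‖ ≤
      ε + (2 * ε * Real.sqrt ((M : ℝ) / ((M : ℝ) - 1)) + σg) *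
        matOpNorm CMC⁻¹ * euclNorm (y - fun i => μMC (x i)) * ∑ i, σ i := by
  have hM2 : (2:ℝ) ≤ (M:ℝ) := by exact_mod_cast hM
  have hMpos : (0:ℝ) < (M:ℝ) := by linarith
  have hM1pos : (0:ℝ) < (M:ℝ) - 1 := by linarith
  set c : Fin M → Fin N → ℝ := fun m i => Y m (x i) - μMC (x i) with hc
  -- μMC as function combination
  have hμfun : μMC = (1/(M:ℝ)) • ∑ m, Y m := by
    funext z
    simp only [Pi.smul_apply, Finset.sum_apply, smul_eq_mul]
    exact hμ z
  have hLμ : L μMC = (1/(M:ℝ)) • ∑ m, L (Y m) := by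
    rw [hμfun, map_smul, map_sum]
  -- A: ‖L μMC - gbar‖ ≤ ε
  have hA : ‖L μMC - gbar‖ ≤ ε := by
    rw [hLμ, hgbar, ← smul_sub, ← Finset.sum_sub_distrib]
    rw [norm_smul]
    have h1 : ‖∑ m, (L (Y m) - g m)‖ ≤ (M:ℝ) * ε := by
      calc ‖∑ m, (L (Y m) - g m)‖ ≤ ∑ m : Fin M, ‖L (Y m) - g m‖ :=
            norm_sum_le _ _
        _ ≤ ∑ _m : Fin M, ε := Finset.sum_le_sum (fun m _ => hg m)
        _ = (M:ℝ) * ε := by simp [mul_comm]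
    have h2 : ‖(1/(M:ℝ))‖ = 1/(M:ℝ) := by
      rw [Real.norm_eq_abs, abs_of_pos (by positivity)]
    rw [h2]
    calc (1/(M:ℝ)) * ‖∑ m, (L (Y m) - g m)‖ ≤ (1/(M:ℝ)) * ((M:ℝ) * ε) := by
          apply mul_le_mul_of_nonneg_left h1 (by positivity)
      _ = ε := by field_simp
  -- B: ‖L (Y m) - L μMC‖ ≤ 2ε + ‖g m - gbar‖
  have hB : ∀ m, ‖L (Y m) - L μMC‖ ≤ 2*ε + ‖g m - gbar‖ := by
    intro m
    have hid : L (Y m) - L μMC = (L (Y m) - g m) + (g m - gbar) - (L μMC - gbar) := by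
      abel
    rw [hid]
    calc ‖(L (Y m) - g m) + (g m - gbar) - (L μMC - gbar)‖
        ≤ ‖(L (Y m) - g m) + (g m - gbar)‖ + ‖L μMC - gbar‖ := norm_sub_le _ _
      _ ≤ ‖L (Y m) - g m‖ + ‖g m - gbar‖ + ‖L μMC - gbar‖ :=
          add_le_add (norm_add_le _ _) le_rfl
      _ ≤ ε + ‖g m - gbar‖ + ε := add_le_add (add_le_add (hg m) le_rfl) hA
      _ = 2*ε + ‖g m - gbar‖ := by ring
  -- kernel columns as linear combinations
  have hKfun : ∀ i, (fun z => kMC z (x i)) =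
      (1/((M:ℝ)-1)) • ∑ m, c m i • (Y m - μMC) := by
    intro i
    funext z
    simp only [Pi.smul_apply, Finset.sum_apply, Pi.sub_apply, smul_eq_mul]
    rw [hk z (x i)]
    congr 1
    apply Finset.sum_congr rfl
    intro m _
    simp only [hc]
    ring
  have hLK : ∀ i, L (fun z => kMC z (x i)) =
      (1/((M:ℝ)-1)) • ∑ m, c m i • (L (Y m) - L μMC) := by
    intro i
    rw [hKfun i, map_smul, map_sum]
    congr 1
    apply Finset.sum_congr rfl
    intro m _
    rw [map_smul, map_sub]
  -- sqrt identities
  have hS : ∀ i, Real.sqrt (∑ m, (c m i)^2) = Real.sqrt ((M:ℝ)-1) * σ i := by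
    intro i
    rw [hσ i, ← Real.sqrt_mul (le_of_lt hM1pos)]
    congr 1
    field_simp
    rfl
  have hSg : Real.sqrt (∑ m, ‖g m - gbar‖^2) = Real.sqrt ((M:ℝ)-1) * σg := by
    rw [hσg, ← Real.sqrt_mul (le_of_lt hM1pos)]
    congr 1
    field_simp
  have hσnn : ∀ i, 0 ≤ σ i := fun i => by rw [hσ i]; exact Real.sqrt_nonneg _
  have hσgnn : 0 ≤ σg := by rw [hσg]; exact Real.sqrt_nonneg _
  -- C: bound on ‖L kMC(·,xⁱ)‖
  set B : ℝ := 2 * ε * Real.sqrt ((M : ℝ) / ((M : ℝ) - 1)) + σg with hBdef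
  have hBnn : 0 ≤ B := by positivity
  have hCb : ∀ i, ‖L (fun z => kMC z (x i))‖ ≤ B * σ i := by
    intro i
    rw [hLK i, norm_smul]
    have h2 : ‖(1/((M:ℝ)-1))‖ = 1/((M:ℝ)-1) := by
      rw [Real.norm_eq_abs, abs_of_pos (by positivity)]
    rw [h2]
    have hsum : ‖∑ m, c m i • (L (Y m) - L μMC)‖ ≤
        ∑ m, |c m i| * (2*ε + ‖g m - gbar‖) := by
      calc ‖∑ m, c m i • (L (Y m) - L μMC)‖ ≤ ∑ m, ‖c m i • (L (Y m) - L μMC)‖ :=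
            norm_sum_le _ _
        _ ≤ ∑ m, |c m i| * (2*ε + ‖g m - gbar‖) := by
            apply Finset.sum_le_sum
            intro m _
            rw [norm_smul, Real.norm_eq_abs]
            exact mul_le_mul_of_nonneg_left (hB m) (abs_nonneg _)
    have hcs1 : ∑ m, |c m i| * 1 ≤
        Real.sqrt (∑ m, |c m i|^2) * Real.sqrt (∑ _m : Fin M, (1:ℝ)^2) :=
      Real.sum_mul_le_sqrt_mul_sqrt _ _ _
    have hcs2 : ∑ m, |c m i| * ‖g m - gbar‖ ≤
        Real.sqrt (∑ m, |c m i|^2) * Real.sqrt (∑ m, ‖g m - gbar‖^2) :=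
      Real.sum_mul_le_sqrt_mul_sqrt _ _ _
    have habs : (∑ m, |c m i|^2) = ∑ m, (c m i)^2 := by
      apply Finset.sum_congr rfl; intro m _; exact sq_abs _
    have hone : Real.sqrt (∑ _m : Fin M, (1:ℝ)^2) = Real.sqrt (M:ℝ) := by
      congr 1; simp
    have hsplit : ∑ m, |c m i| * (2*ε + ‖g m - gbar‖) =
        2*ε * (∑ m, |c m i| * 1) + ∑ m, |c m i| * ‖g m - gbar‖ := by
      rw [Finset.mul_sum, ← Finset.sum_add_distrib]
      apply Finset.sum_congr rfl; intro m _; ring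
    have hkey : ∑ m, |c m i| * (2*ε + ‖g m - gbar‖) ≤
        2*ε * (Real.sqrt ((M:ℝ)-1) * σ i * Real.sqrt (M:ℝ)) +
          Real.sqrt ((M:ℝ)-1) * σ i * (Real.sqrt ((M:ℝ)-1) * σg) := by
      rw [hsplit]
      gcongr
      · calc ∑ m, |c m i| * 1 ≤
            Real.sqrt (∑ m, |c m i|^2) * Real.sqrt (∑ _m : Fin M, (1:ℝ)^2) := hcs1
          _ = Real.sqrt ((M:ℝ)-1) * σ i * Real.sqrt (M:ℝ) := by
              rw [habs, hS i, hone]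
      · calc ∑ m, |c m i| * ‖g m - gbar‖ ≤
            Real.sqrt (∑ m, |c m i|^2) * Real.sqrt (∑ m, ‖g m - gbar‖^2) := hcs2
          _ = Real.sqrt ((M:ℝ)-1) * σ i * (Real.sqrt ((M:ℝ)-1) * σg) := by
              rw [habs, hS i, hSg]
    have hfinal : (1/((M:ℝ)-1)) *
        (2*ε * (Real.sqrt ((M:ℝ)-1) * σ i * Real.sqrt (M:ℝ)) +
          Real.sqrt ((M:ℝ)-1) * σ i * (Real.sqrt ((M:ℝ)-1) * σg)) = B * σ i := by
      have hs1 : Real.sqrt ((M:ℝ)-1) * Real.sqrt ((M:ℝ)-1) = (M:ℝ)-1 :=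
        Real.mul_self_sqrt (le_of_lt hM1pos)
      have hdiv : Real.sqrt ((M:ℝ) / ((M:ℝ)-1)) = Real.sqrt (M:ℝ) / Real.sqrt ((M:ℝ)-1) :=
        Real.sqrt_div (le_of_lt hMpos) _
      have hspos : 0 < Real.sqrt ((M:ℝ)-1) := Real.sqrt_pos.mpr hM1pos
      rw [hBdef, hdiv]
      set s := Real.sqrt ((M:ℝ)-1) with hsdef
      rw [← hs1]
      field_simp
    calc (1/((M:ℝ)-1)) * ‖∑ m, c m i • (L (Y m) - L μMC)‖
        ≤ (1/((M:ℝ)-1)) * (∑ m, |c m i| * (2*ε + ‖g m - gbar‖)) := by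
          apply mul_le_mul_of_nonneg_left hsum (by positivity)
      _ ≤ (1/((M:ℝ)-1)) * (2*ε * (Real.sqrt ((M:ℝ)-1) * σ i * Real.sqrt (M:ℝ)) +
            Real.sqrt ((M:ℝ)-1) * σ i * (Real.sqrt ((M:ℝ)-1) * σg)) := by
          apply mul_le_mul_of_nonneg_left hkey (by positivity)
      _ = B * σ i := hfinal
  -- D: |ta i| ≤ K
  set v : Fin N → ℝ := y - fun i => μMC (x i) with hv
  set K : ℝ := matOpNorm CMC⁻¹ * euclNorm v with hK
  have hKnn : 0 ≤ K := by
    apply mul_nonneg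
    · exact norm_nonneg _
    · exact norm_nonneg _
  have hD : ∀ i, |ta i| ≤ K := by
    intro i
    rw [hta]
    have h1 : (EuclideanSpace.equiv (Fin N) ℝ).symm (CMC⁻¹.mulVec v) =
        Matrix.toEuclideanCLM (𝕜 := ℝ) CMC⁻¹ ((EuclideanSpace.equiv (Fin N) ℝ).symm v) := by
      simp [Matrix.coe_toEuclideanCLM_eq_toEuclideanLin, Matrix.toEuclideanLin_apply]
    have h2 : ‖(EuclideanSpace.equiv (Fin N) ℝ).symm (CMC⁻¹.mulVec v)‖ ≤ K := by
      rw [h1, hK, matOpNorm, euclNorm]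
      exact (Matrix.toEuclideanCLM (𝕜 := ℝ) CMC⁻¹).le_opNorm _
    refine le_trans ?_ h2
    rw [EuclideanSpace.norm_eq]
    have h3 : |CMC⁻¹.mulVec v i| = Real.sqrt (|CMC⁻¹.mulVec v i|^2) := by
      rw [Real.sqrt_sq (abs_nonneg _)]
    rw [h3]
    apply Real.sqrt_le_sqrt
    exact Finset.single_le_sum (f := fun j => ‖CMC⁻¹.mulVec v j‖^2)
      (fun j _ => by positivity) (Finset.mem_univ i)
  -- assemble
  have hyfun : yhat = μMC + ∑ i, ta i • (fun z => kMC z (x i)) := by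
    funext z
    simp only [Pi.add_apply, Finset.sum_apply, Pi.smul_apply, smul_eq_mul]
    exact hyhat z
  have hLy : L yhat = L μMC + ∑ i, ta i • L (fun z => kMC z (x i)) := by
    rw [hyfun, map_add, map_sum]
    congr 1
    apply Finset.sum_congr rfl
    intro i _
    rw [map_smul]
  have hdecomp : L yhat - gbar = (L μMC - gbar) + ∑ i, ta i • L (fun z => kMC z (x i)) := by
    rw [hLy]; abel
  rw [hdecomp]
  calc ‖(L μMC - gbar) + ∑ i, ta i • L (fun z => kMC z (x i))‖
      ≤ ‖L μMC - gbar‖ + ‖∑ i, ta i • L (fun z => kMC z (x i))‖ := norm_add_le _ _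
    _ ≤ ε + ∑ i, |ta i| * ‖L (fun z => kMC z (x i))‖ := by
        refine add_le_add hA ?_
        calc ‖∑ i, ta i • L (fun z => kMC z (x i))‖
            ≤ ∑ i, ‖ta i • L (fun z => kMC z (x i))‖ := norm_sum_le _ _
          _ = ∑ i, |ta i| * ‖L (fun z => kMC z (x i))‖ := by
              apply Finset.sum_congr rfl; intro i _; rw [norm_smul, Real.norm_eq_abs]
    _ ≤ ε + ∑ i, K * (B * σ i) := by
        refine add_le_add le_rfl (Finset.sum_le_sum fun i _ => ?_)
        exact mul_le_mul (hD i) (hCb i) (norm_nonneg _) hKnn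
    _ = ε + K * (B * ∑ i, σ i) := by rw [← Finset.mul_sum, ← Finset.mul_sum]
    _ = ε + B * matOpNorm CMC⁻¹ * euclNorm v * ∑ i, σ i := by rw [hK]; ring
end
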